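/- Let μ be a finite Borel measure on ℝ^d with closed support K_μ, let Λ ⊂ ℝ^d be countable, let φ : K_μ → ℝ^d be Borel measurable, and let ν = φ_*μ be the pushforward measure. Then E(Λ, φ) = {x ↦ e^{2πi λ·φ(x)} : λ ∈ Λ} is complete in L²(μ) if and only if φ is μ-essentially injective and E(Λ) = {y ↦ e^{2πi λ·y} : λ ∈ Λ} is complete in L²(ν). -/

import Mathlib

open MeasureTheory Filter Set
open scoped Real ENNReal Topology

noncomputable section

/-- `e2pi t = e^{2π i t}`. -/
def e2pi (t : ℝ) : ℂ := Complex.exp (2 * Real.pi * Complex.I * t)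

/-- The Euclidean dot product on `Fin d → ℝ`. -/
def dotp {d : ℕ} (a b : Fin d → ℝ) : ℝ := ∑ i, a i * b i

/-- `φ` is `μ`-essentially injective. -/
def EssInj {α β : Type*} [MeasurableSpace α] [MeasurableSpace β]
    (μ : Measure α) (φ : α → β) : Prop :=
  ∀ f : α → ℂ, MemLp f 2 μ →
    ∃ h : β → ℂ, MemLp h 2 (Measure.map φ μ) ∧ f =ᵐ[μ] fun x => h (φ x)

/-- The family `E(Λ, φ) = {x ↦ e^{2π i λ·φ(x)} : λ ∈ Λ}` is complete in `L²(μ)`: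
the only `f ∈ L²(μ)` orthogonal to every member of the family is `0`. -/
def CompleteExp {α : Type*} [MeasurableSpace α] {d : ℕ}
    (μ : Measure α) (Λ : Set (Fin d → ℝ)) (φ : α → Fin d → ℝ) : Prop :=
  ∀ g : α → ℂ, MemLp g 2 μ →
    (∀ lam ∈ Λ, ∫ x, g x * (starRingEnd ℂ) (e2pi (dotp lam (φ x))) ∂μ = 0) →
    g =ᵐ[μ] 0

/-!
Composition with `φ` is a linear isometry `T : L²(φ_*μ) → L²(μ)`, so its range `V` is closed,
and essential injectivity says exactly that `V` is all of `L²(μ)`. `T` sends the exponential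
`y ↦ e^{2πiλ·y}` to `x ↦ e^{2πiλ·φ(x)}`, and by change of variables `⟪h, e_λ⟫_ν = ⟪h ∘ φ, e_λ ∘ φ⟫_μ`.
If `E(Λ, φ)` is complete, then, as it lies in `V`, `Vᗮ = 0`, hence `V = L²(μ)`; and a function
`h ∈ L²(ν)` orthogonal to `E(Λ)` pulls back to `h ∘ φ` orthogonal to `E(Λ, φ)`, so `h ∘ φ = 0`
and `h = 0` `ν`-a.e. Conversely, if `V = L²(μ)` then `f ⊥ E(Λ, φ)` factors as `h ∘ φ` with
`h ⊥ E(Λ)`, so `h = 0` and `f = 0`.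
-/

open ComplexConjugate

theorem norm_e2pi (t : ℝ) : ‖e2pi t‖ = 1 := by
  have h : e2pi t = Complex.exp ((2 * Real.pi * t : ℝ) * Complex.I) := by
    unfold e2pi; push_cast; ring_nf
  rw [h, Complex.norm_exp_ofReal_mul_I]

theorem measurable_e2pi_dotp {d : ℕ} (lam : Fin d → ℝ) :
    Measurable fun y : Fin d → ℝ => e2pi (dotp lam y) := by
  unfold e2pi dotp
  fun_prop

theorem memLp_e2pi_dotp {d : ℕ} (ν : Measure (Fin d → ℝ)) [IsFiniteMeasure ν]
    (lam : Fin d → ℝ) : MemLp (fun y => e2pi (dotp lam y)) 2 ν :=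
  MemLp.of_bound (measurable_e2pi_dotp lam).aestronglyMeasurable 1
    (Eventually.of_forall fun _ => (norm_e2pi _).le)

theorem ae_eq_zero_of_comp_ae_eq_zero {α β E : Type*} [MeasurableSpace α] [MeasurableSpace β]
    [TopologicalSpace E] [TopologicalSpace.MetrizableSpace E] [Zero E]
    {μ : Measure α} {φ : α → β} (hφ : AEMeasurable φ μ) {h : β → E}
    (hh : AEStronglyMeasurable h (μ.map φ)) (hz : h ∘ φ =ᵐ[μ] 0) : h =ᵐ[μ.map φ] 0 := by
  refine hh.ae_eq_mk.trans ?_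
  have hmk : hh.mk h ∘ φ =ᵐ[μ] 0 := (ae_eq_comp hφ hh.ae_eq_mk).symm.trans hz
  exact (ae_map_iff hφ (hh.stronglyMeasurable_mk.measurableSet_eq_fun
    stronglyMeasurable_const)).2 hmk

theorem integral_map_mul_conj_e2pi {α : Type*} [MeasurableSpace α] {d : ℕ} {μ : Measure α}
    {φ : α → Fin d → ℝ} (hφ : AEMeasurable φ μ) {h : (Fin d → ℝ) → ℂ}
    (hh : AEStronglyMeasurable h (μ.map φ)) (lam : Fin d → ℝ) :
    ∫ y, h y * conj (e2pi (dotp lam y)) ∂μ.map φ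
      = ∫ x, h (φ x) * conj (e2pi (dotp lam (φ x))) ∂μ :=
  integral_map hφ (hh.mul
    (Complex.continuous_conj.measurable.comp (measurable_e2pi_dotp lam)).aestronglyMeasurable)

theorem L2.inner_eq_integral_mul_conj {α : Type*} [MeasurableSpace α] {μ : Measure α}
    {F : Lp ℂ 2 μ} {f : α → ℂ} (hF : F =ᵐ[μ] f) (G : Lp ℂ 2 μ) :
    inner ℂ F G = ∫ x, G x * conj (f x) ∂μ := by
  rw [L2.inner_def]
  refine integral_congr_ae ?_
  filter_upwards [hF] with x hx
  rw [RCLike.inner_apply', hx, mul_comm]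

section Composition

variable {α β : Type*} [MeasurableSpace α] [MeasurableSpace β] {μ : Measure α} {φ : α → β}

def compL2 (hφ : Measurable φ) : Lp ℂ 2 (μ.map φ) →ₗᵢ[ℂ] Lp ℂ 2 μ :=
  Lp.compMeasurePreservingₗᵢ ℂ φ ⟨hφ, rfl⟩

theorem coeFn_compL2 (hφ : Measurable φ) (h : Lp ℂ 2 (μ.map φ)) :
    compL2 hφ h =ᵐ[μ] h ∘ φ :=
  Lp.coeFn_compMeasurePreserving h _

instance completeSpace_range_compL2 (hφ : Measurable φ) :
    CompleteSpace (LinearMap.range (compL2 (μ := μ) hφ).toLinearMap) :=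
  ((compL2 hφ).isometry.isUniformInducing.isComplete_range).completeSpace_coe

theorem essInj_of_range_compL2_eq_top (hφ : Measurable φ)
    (htop : LinearMap.range (compL2 (μ := μ) hφ).toLinearMap = ⊤) : EssInj μ φ := by
  intro f hf
  obtain ⟨h, hTh⟩ : hf.toLp f ∈ LinearMap.range (compL2 hφ).toLinearMap := htop ▸ trivial
  refine ⟨h, Lp.memLp h, hf.coeFn_toLp.symm.trans ?_⟩
  rw [← hTh]
  exact coeFn_compL2 hφ h

end Composition

section Exponentials

variable {α : Type*} [MeasurableSpace α] {d : ℕ} {μ : Measure α} {Λ : Set (Fin d → ℝ)}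
  {φ : α → Fin d → ℝ}

theorem range_compL2_eq_top_of_completeExp [IsFiniteMeasure μ] (hφ : Measurable φ)
    (H : CompleteExp μ Λ φ) : LinearMap.range (compL2 (μ := μ) hφ).toLinearMap = ⊤ := by
  refine Submodule.orthogonal_eq_bot_iff.1 ((Submodule.eq_bot_iff _).2 fun w hw => ?_)
  refine (Lp.eq_zero_iff_ae_eq_zero).2 (H w (Lp.memLp w) fun lam _ => ?_)
  let e : Lp ℂ 2 (μ.map φ) := (memLp_e2pi_dotp (μ.map φ) lam).toLp _
  have he : compL2 hφ e =ᵐ[μ] fun x => e2pi (dotp lam (φ x)) :=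
    (coeFn_compL2 hφ e).trans
      (ae_eq_comp hφ.aemeasurable (memLp_e2pi_dotp (μ.map φ) lam).coeFn_toLp)
  rw [← L2.inner_eq_integral_mul_conj he]
  exact (Submodule.mem_orthogonal _ w).1 hw _ ⟨e, rfl⟩

theorem completeExp_map_of_completeExp (hφ : AEMeasurable φ μ) (H : CompleteExp μ Λ φ) :
    CompleteExp (μ.map φ) Λ id := by
  intro h hh horth
  refine ae_eq_zero_of_comp_ae_eq_zero hφ hh.1 (H _ (hh.comp_of_map hφ) fun lam hlam => ?_)
  exact (integral_map_mul_conj_e2pi hφ hh.1 lam).symm.trans (horth lam hlam)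

theorem completeExp_of_essInj_of_completeExp_map (hφ : AEMeasurable φ μ) (hinj : EssInj μ φ)
    (H : CompleteExp (μ.map φ) Λ id) : CompleteExp μ Λ φ := by
  intro f hf horth
  obtain ⟨h, hh, hfh⟩ := hinj f hf
  refine hfh.trans (ae_eq_comp hφ (H h hh fun lam hlam => ?_))
  refine (integral_map_mul_conj_e2pi hφ hh.1 lam).trans ((integral_congr_ae ?_).trans
    (horth lam hlam))
  filter_upwards [hfh] with x hx
  rw [hx]

end Exponentials

theorem statement2_general {d : ℕ} (μ : Measure (Fin d → ℝ)) [IsFiniteMeasure μ]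
    (Λ : Set (Fin d → ℝ))
    (φ : (Fin d → ℝ) → (Fin d → ℝ)) (hφ : Measurable φ) :
    CompleteExp μ Λ φ ↔ (EssInj μ φ ∧ CompleteExp (Measure.map φ μ) Λ id) :=
  ⟨fun H => ⟨essInj_of_range_compL2_eq_top hφ (range_compL2_eq_top_of_completeExp hφ H),
      completeExp_map_of_completeExp hφ.aemeasurable H⟩,
    fun ⟨hinj, H⟩ => completeExp_of_essInj_of_completeExp_map hφ.aemeasurable hinj H⟩

/-- `E(Λ, φ)` is complete in `L²(μ)` iff `φ` is `μ`-essentially injective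
and `E(Λ)` is complete in `L²(ν)`, where `ν = φ⋆μ`. -/
theorem statement2 {d : ℕ} (μ : Measure (Fin d → ℝ)) [IsFiniteMeasure μ]
    (Λ : Set (Fin d → ℝ)) (hΛ : Λ.Countable)
    (φ : (Fin d → ℝ) → (Fin d → ℝ)) (hφ : Measurable φ) :
    CompleteExp μ Λ φ ↔ (EssInj μ φ ∧ CompleteExp (Measure.map φ μ) Λ id) :=
  statement2_general μ Λ φ hφ
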